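/- Deterministically (for any data X ∈ ℝ^{n×p}, Y ∈ ℝ^{n×T} and any λ ≥ 0, τ ≥ 0), the matrix N = (I_T ⊗ X) M† (I_T ⊗ Xᵀ) ∈ ℝ^{nT×nT} built from the multi-task elastic-net solution satisfies ‖N‖_op ≤ 1. -/

import Mathlib

open MeasureTheory ProbabilityTheory Matrix Filter
open scoped BigOperators Kronecker NNReal ENNReal

noncomputable section

namespace MTS

instance matMeasurableSpace {a b : Type*} : MeasurableSpace (Matrix a b ℝ) :=
  inferInstanceAs (MeasurableSpace (a → b → ℝ))

instance matNormedAddCommGroup {a b : Type*} [Fintype a] [Fintype b] :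
    NormedAddCommGroup (Matrix a b ℝ) :=
  inferInstanceAs (NormedAddCommGroup (a → b → ℝ))

instance matNormedSpace {a b : Type*} [Fintype a] [Fintype b] :
    NormedSpace ℝ (Matrix a b ℝ) :=
  inferInstanceAs (NormedSpace ℝ (a → b → ℝ))

instance matMeasureSpace {a b : Type*} [Fintype a] [Fintype b] :
    MeasureSpace (Matrix a b ℝ) :=
  inferInstanceAs (MeasureSpace (a → b → ℝ))

/-- Squared Frobenius norm of a matrix. -/
def frobSq {a b : Type*} [Fintype a] [Fintype b] (A : Matrix a b ℝ) : ℝ :=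
  ∑ i, ∑ j, A i j ^ 2

/-- Frobenius norm of a matrix. -/
def frob {a b : Type*} [Fintype a] [Fintype b] (A : Matrix a b ℝ) : ℝ :=
  Real.sqrt (frobSq A)

/-- ℓ2-operator norm of a matrix. -/
def opNorm {a b : Type*} [Fintype a] [Fintype b] [DecidableEq b] (A : Matrix a b ℝ) : ℝ :=
  ‖LinearMap.toContinuousLinearMap (Matrix.toEuclideanLin A)‖

open Classical in
def matSqrt {p : ℕ} (A : Matrix (Fin p) (Fin p) ℝ) : Matrix (Fin p) (Fin p) ℝ :=
  if h : A.PosSemidef then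
    (h.1.eigenvectorUnitary : Matrix (Fin p) (Fin p) ℝ) *
      Matrix.diagonal (fun i => Real.sqrt (h.1.eigenvalues i)) *
      (star h.1.eigenvectorUnitary : Matrix (Fin p) (Fin p) ℝ)
  else 0

/-- Nuclear norm of a square matrix. -/
def nucNorm {T : ℕ} (A : Matrix (Fin T) (Fin T) ℝ) : ℝ :=
  (matSqrt (Aᵀ * A)).trace

open Classical in
def pinv {N : Type*} [Fintype N] [DecidableEq N] (M : Matrix N N ℝ) : Matrix N N ℝ :=
  if h : ∃ G : Matrix N N ℝ,
      M * G * M = M ∧ G * M * G = G ∧ (M * G)ᵀ = M * G ∧ (G * M)ᵀ = G * M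
  then h.choose else 0

/-- The ℓ_{2,1} norm of a matrix: sum of the Euclidean norms of its rows. -/
def norm21 {p T : ℕ} (B : Matrix (Fin p) (Fin T) ℝ) : ℝ :=
  ∑ j, Real.sqrt (∑ t, B j t ^ 2)

/-- The multi-task elastic-net objective function. -/
def objective {p T : ℕ} (n : ℕ) (lam tau : ℝ) (Y : Matrix (Fin n) (Fin T) ℝ)
    (X : Matrix (Fin n) (Fin p) ℝ) (B : Matrix (Fin p) (Fin T) ℝ) : ℝ :=
  (1 / (2 * (n : ℝ))) * frobSq (Y - X * B) + lam * norm21 B + (tau / 2) * frobSq B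

open Classical in
def nnzRows {p T : ℕ} (B : Matrix (Fin p) (Fin T) ℝ) : ℕ :=
  (Finset.univ.filter fun j => B j ≠ 0).card

open Classical in
def nnzVec {p : ℕ} (b : Fin p → ℝ) : ℕ :=
  (Finset.univ.filter fun j => b j ≠ 0).card

open Classical in
def rowHess {T : ℕ} (lam : ℝ) (r : Fin T → ℝ) : Matrix (Fin T) (Fin T) ℝ :=
  if r = 0 then 0
  else (lam * (Real.sqrt (∑ t, r t ^ 2))⁻¹) •
    ((1 : Matrix (Fin T) (Fin T) ℝ) - (∑ t, r t ^ 2)⁻¹ • Matrix.vecMulVec r r)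

open Classical in
def Psupp {p T : ℕ} (B : Matrix (Fin p) (Fin T) ℝ) : Matrix (Fin p) (Fin p) ℝ :=
  Matrix.of fun j k => if j = k ∧ B j ≠ 0 then (1 : ℝ) else 0

open Classical in
def Xsupp {n p T : ℕ} (X : Matrix (Fin n) (Fin p) ℝ) (B : Matrix (Fin p) (Fin T) ℝ) :
    Matrix (Fin n) (Fin p) ℝ :=
  Matrix.of fun i j => if B j ≠ 0 then X i j else 0

/-- The matrix `M = I_T ⊗ (X_ŜᵀX_Ŝ + τ n P_Ŝ) + n Σ_{k ∈ Ŝ} (H^{(k)} ⊗ e_k e_kᵀ)`. -/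
def Mmat {p T : ℕ} (n : ℕ) (lam tau : ℝ) (X : Matrix (Fin n) (Fin p) ℝ)
    (B : Matrix (Fin p) (Fin T) ℝ) : Matrix (Fin T × Fin p) (Fin T × Fin p) ℝ :=
  (1 : Matrix (Fin T) (Fin T) ℝ) ⊗ₖ ((Xsupp X B)ᵀ * Xsupp X B + (tau * n) • Psupp B)
    + (n : ℝ) • ∑ k : Fin p, (rowHess lam (B k)) ⊗ₖ (Matrix.single k k (1 : ℝ))

/-- The interaction matrix `Â = Σ_i (I_T ⊗ e_iᵀX) M† (I_T ⊗ Xᵀe_i)`, written entrywise: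
`Â_{t,t'} = Σ_i Σ_j Σ_j' X_{ij} (M†)_{(t,j),(t',j')} X_{ij'}`. -/
def Amat {p T : ℕ} (n : ℕ) (lam tau : ℝ) (X : Matrix (Fin n) (Fin p) ℝ)
    (B : Matrix (Fin p) (Fin T) ℝ) : Matrix (Fin T) (Fin T) ℝ :=
  Matrix.of fun t t' => ∑ i : Fin n, ∑ j : Fin p, ∑ j' : Fin p,
    X i j * pinv (Mmat n lam tau X B) (t, j) (t', j') * X i j'

/-- The proposed noise covariance estimator `Ŝ`. -/
def Scov {p T : ℕ} (n : ℕ) (lam tau : ℝ) (Sig : Matrix (Fin p) (Fin p) ℝ)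
    (X : Matrix (Fin n) (Fin p) ℝ) (Y : Matrix (Fin n) (Fin T) ℝ)
    (B : Matrix (Fin p) (Fin T) ℝ) : Matrix (Fin T) (Fin T) ℝ :=
  ((n : ℝ) • (1 : Matrix (Fin T) (Fin T) ℝ) - Amat n lam tau X B)⁻¹ *
    ((Y - X * B)ᵀ * ((((p : ℝ) + (n : ℝ)) • (1 : Matrix (Fin n) (Fin n) ℝ))
        - X * Sig⁻¹ * Xᵀ) * (Y - X * B)
      - Amat n lam tau X B * ((Y - X * B)ᵀ * (Y - X * B))
      - ((Y - X * B)ᵀ * (Y - X * B)) * Amat n lam tau X B) *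
    ((n : ℝ) • (1 : Matrix (Fin T) (Fin T) ℝ) - Amat n lam tau X B)⁻¹

/-- A random vector is centered Gaussian with covariance `S`: every linear functional of it
is a centered real Gaussian with the corresponding variance. -/
def IsGaussianVec {Ω : Type*} [MeasurableSpace Ω] (P : Measure Ω) {T : ℕ}
    (v : Ω → Fin T → ℝ) (S : Matrix (Fin T) (Fin T) ℝ) : Prop :=
  ∀ a : Fin T → ℝ,
    Measure.map (fun ω => ∑ t, a t * v ω t) P =
      gaussianReal 0 (Real.toNNReal (a ⬝ᵥ S.mulVec a))

/-- The rows of the random matrix `M` are i.i.d. centered Gaussian vectors with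
covariance `S`. -/
def IIDGaussianRows {Ω : Type*} [MeasurableSpace Ω] (P : Measure Ω) {n T : ℕ}
    (M : Ω → Matrix (Fin n) (Fin T) ℝ) (S : Matrix (Fin T) (Fin T) ℝ) : Prop :=
  (∀ i j, Measurable fun ω => M ω i j) ∧
    iIndepFun (fun i ω => M ω i) P ∧
    ∀ i, IsGaussianVec P (fun ω => M ω i) S

/-- All the assumptions of the multi-task linear model with multi-task elastic-net
estimator `Bhat`. -/
structure ModelHyps {n p T : ℕ} {Ω : Type*} [MeasurableSpace Ω] (P : Measure Ω)
    (Sig : Matrix (Fin p) (Fin p) ℝ) (S : Matrix (Fin T) (Fin T) ℝ)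
    (Bstar : Matrix (Fin p) (Fin T) ℝ)
    (X : Ω → Matrix (Fin n) (Fin p) ℝ) (E : Ω → Matrix (Fin n) (Fin T) ℝ)
    (lam tau : ℝ) (Bhat : Ω → Matrix (Fin p) (Fin T) ℝ) : Prop where
  prob : IsProbabilityMeasure P
  hn : 0 < n
  hp : 0 < p
  hT : 0 < T
  hSig : Sig.PosDef
  hS : S.PosSemidef
  hX : IIDGaussianRows P X Sig
  hE : IIDGaussianRows P E S
  indep : IndepFun X E P
  hlam : 0 ≤ lam
  htau : 0 ≤ tau
  hBhat_meas : Measurable Bhat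
  hBhat_min : ∀ ω B, objective n lam tau (X ω * Bstar + E ω) (X ω) (Bhat ω)
      ≤ objective n lam tau (X ω * Bstar + E ω) (X ω) B

/-- The event `U₁` that `B̂` has at most `n(1-c)/2` nonzero rows. -/
def U1set {p T : ℕ} {Ω : Type*} (Bhat : Ω → Matrix (Fin p) (Fin T) ℝ) (n : ℕ) (c : ℝ) :
    Set Ω :=
  {ω | (nnzRows (Bhat ω) : ℝ) ≤ (n : ℝ) * (1 - c) / 2}

/-- Smallest eigenvalue of a symmetric matrix (junk value `0` otherwise). -/
def eigMin {p : ℕ} (A : Matrix (Fin p) (Fin p) ℝ) : ℝ :=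
  if h : A.IsHermitian then ⨅ i, h.eigenvalues i else 0


/-- Residual matrix `F = Y - XB` with `Y = XB* + E`. -/
def resid {n p T : ℕ} (Bstar : Matrix (Fin p) (Fin T) ℝ) (X : Matrix (Fin n) (Fin p) ℝ)
    (E : Matrix (Fin n) (Fin T) ℝ) (B : Matrix (Fin p) (Fin T) ℝ) :
    Matrix (Fin n) (Fin T) ℝ :=
  X * Bstar + E - X * B

/-- Error matrix `H = Σ^{1/2}(B - B*)`. -/
def herr {p T : ℕ} (Sig : Matrix (Fin p) (Fin p) ℝ) (Bstar B : Matrix (Fin p) (Fin T) ℝ) :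
    Matrix (Fin p) (Fin T) ℝ :=
  matSqrt Sig * (B - Bstar)

/-- The matrix `I_T - Â/n`. -/
def ImA {p T : ℕ} (n : ℕ) (lam tau : ℝ) (X : Matrix (Fin n) (Fin p) ℝ)
    (B : Matrix (Fin p) (Fin T) ℝ) : Matrix (Fin T) (Fin T) ℝ :=
  (1 : Matrix (Fin T) (Fin T) ℝ) - (n : ℝ)⁻¹ • Amat n lam tau X B

/-- Residual as a function of `Z`, where `X = ZΣ^{1/2}` and `Y = XB* + E`. -/
def Fz {n p T : ℕ} (Sig : Matrix (Fin p) (Fin p) ℝ) (Bstar : Matrix (Fin p) (Fin T) ℝ)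
    (E : Matrix (Fin n) (Fin T) ℝ) (Z : Matrix (Fin n) (Fin p) ℝ)
    (B : Matrix (Fin p) (Fin T) ℝ) : Matrix (Fin n) (Fin T) ℝ :=
  Z * matSqrt Sig * Bstar + E - Z * matSqrt Sig * B

/-- `D(Z) = (‖H(Z)‖_F² + ‖F(Z)‖_F²/n)^{1/2}`. -/
def Dz {n p T : ℕ} (Sig : Matrix (Fin p) (Fin p) ℝ) (Bstar : Matrix (Fin p) (Fin T) ℝ)
    (E : Matrix (Fin n) (Fin T) ℝ) (Z : Matrix (Fin n) (Fin p) ℝ)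
    (B : Matrix (Fin p) (Fin T) ℝ) : ℝ :=
  Real.sqrt (frob (herr Sig Bstar B) ^ 2 + frob (Fz Sig Bstar E Z B) ^ 2 / (n : ℝ))

/-- The distribution of an `n × p` random matrix with i.i.d. standard Gaussian entries. -/
def stdGaussMat (n p : ℕ) : Measure (Matrix (Fin n) (Fin p) ℝ) :=
  Measure.pi fun _ : Fin n => Measure.pi fun _ : Fin p => gaussianReal 0 1

/-- The method-of-moments estimator of the noise covariance. -/
def SmmEst {T : ℕ} (n p : ℕ) (Sig : Matrix (Fin p) (Fin p) ℝ)
    (X : Matrix (Fin n) (Fin p) ℝ) (Y : Matrix (Fin n) (Fin T) ℝ) :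
    Matrix (Fin T) (Fin T) ℝ :=
  (((n : ℝ) + 1 + (p : ℝ)) / ((n : ℝ) * ((n : ℝ) + 1))) • (Yᵀ * Y)
    - (1 / ((n : ℝ) * ((n : ℝ) + 1))) • (Yᵀ * X * Sig⁻¹ * Xᵀ * Y)


/-!
Write `A = I_T ⊗ X_Ŝ` and `P = I_T ⊗ P_Ŝ`. Then `M - AᵀA = I_T ⊗ τnP_Ŝ + n Σ_k H^{(k)} ⊗ e_k e_kᵀ`
is positive semidefinite, and `M P = M`, which for the symmetric `M` forces `M† P = M† = P M†`;
hence `N = A M† Aᵀ`. For `u = M† Aᵀ v` this gives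
`‖Nv‖² = ‖Au‖² ≤ uᵀMu = vᵀAu = vᵀNv ≤ ‖v‖ ‖Nv‖`, so `‖Nv‖ ≤ ‖v‖`.
-/

section MoorePenrose

variable {N : Type*} [Fintype N] {M G G' P : Matrix N N ℝ}

def IsMoorePenroseInverse (M G : Matrix N N ℝ) : Prop :=
  M * G * M = M ∧ G * M * G = G ∧ (M * G)ᵀ = M * G ∧ (G * M)ᵀ = G * M

namespace IsMoorePenroseInverse

theorem transpose (h : IsMoorePenroseInverse M G) : IsMoorePenroseInverse Mᵀ Gᵀ := by
  obtain ⟨h₁, h₂, h₃, h₄⟩ := h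
  refine ⟨?_, ?_, ?_, ?_⟩
  · rw [← transpose_mul, ← transpose_mul, ← Matrix.mul_assoc, h₁]
  · rw [← transpose_mul, ← transpose_mul, ← Matrix.mul_assoc, h₂]
  · rw [← transpose_mul]; exact congrArg Matrix.transpose h₄
  · rw [← transpose_mul]; exact congrArg Matrix.transpose h₃

theorem unique (h : IsMoorePenroseInverse M G) (h' : IsMoorePenroseInverse M G') : G = G' := by
  obtain ⟨h₁, h₂, h₃, h₄⟩ := h
  obtain ⟨h₁', h₂', h₃', h₄'⟩ := h'
  have hMG : M * G = M * G' :=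
    calc M * G = (M * G' * M) * G := by rw [h₁']
      _ = ((M * G) * (M * G'))ᵀ := by
        rw [transpose_mul, h₃, h₃']; simp only [Matrix.mul_assoc]
      _ = M * G' := by rw [← Matrix.mul_assoc, h₁, h₃']
  have hGM : G * M = G' * M :=
    calc G * M = G * (M * G' * M) := by rw [h₁']
      _ = ((G' * M) * (G * M))ᵀ := by
        rw [transpose_mul, h₄, h₄']; simp only [Matrix.mul_assoc]
      _ = G' * M := by rw [Matrix.mul_assoc, ← Matrix.mul_assoc M, h₁, h₄']
  calc G = G * M * G := h₂.symm
    _ = G' * M * G' := by rw [Matrix.mul_assoc, hMG, ← Matrix.mul_assoc, hGM]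
    _ = G' := h₂'

theorem transpose_eq_self (hM : Mᵀ = M) (h : IsMoorePenroseInverse M G) : Gᵀ = G :=
  (hM ▸ h.transpose).unique h

theorem mul_comm (hM : Mᵀ = M) (h : IsMoorePenroseInverse M G) : M * G = G * M := by
  rw [← h.2.2.1, transpose_mul, hM, h.transpose_eq_self hM]

theorem mul_eq_self_of_mul_eq (hM : Mᵀ = M) (h : IsMoorePenroseInverse M G)
    (hMP : M * P = M) : G * P = G :=
  calc G * P = G * (M * G) * P := by rw [← Matrix.mul_assoc, h.2.1]
    _ = G * G * M := by rw [h.mul_comm hM, Matrix.mul_assoc, Matrix.mul_assoc, hMP,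
      Matrix.mul_assoc]
    _ = G := by rw [Matrix.mul_assoc, ← h.mul_comm hM, ← Matrix.mul_assoc, h.2.1]

end IsMoorePenroseInverse

variable [DecidableEq N]

theorem isMoorePenroseInverse_pinv_or_pinv_eq_zero (M : Matrix N N ℝ) :
    IsMoorePenroseInverse M (pinv M) ∨ pinv M = 0 := by
  unfold pinv
  split_ifs with h
  · exact Or.inl h.choose_spec
  · exact Or.inr rfl

theorem transpose_pinv_of_transpose_eq (hM : Mᵀ = M) : (pinv M)ᵀ = pinv M := by
  rcases isMoorePenroseInverse_pinv_or_pinv_eq_zero M with h | h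
  · exact h.transpose_eq_self hM
  · rw [h, transpose_zero]

theorem pinv_mul_eq_self_of_mul_eq (hM : Mᵀ = M) (hMP : M * P = M) : pinv M * P = pinv M := by
  rcases isMoorePenroseInverse_pinv_or_pinv_eq_zero M with h | h
  · exact h.mul_eq_self_of_mul_eq hM hMP
  · rw [h, Matrix.zero_mul]

end MoorePenrose

section OperatorNorm

variable {m N : Type*} [Fintype m]

theorem transpose_eq_of_posSemidef_sub_transpose_mul_self {M : Matrix N N ℝ} {A : Matrix m N ℝ}
    (hMA : (M - Aᵀ * A).PosSemidef) : Mᵀ = M := by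
  have h := isHermitian_iff_isSymm.mp hMA.isHermitian
  rwa [IsSymm, transpose_sub, transpose_mul, transpose_transpose, sub_left_inj] at h

theorem opNorm_le_one_of_dotProduct_le [DecidableEq m] (K : Matrix m m ℝ)
    (hK : ∀ v, (K *ᵥ v) ⬝ᵥ (K *ᵥ v) ≤ v ⬝ᵥ (K *ᵥ v)) : opNorm K ≤ 1 := by
  refine ContinuousLinearMap.opNorm_le_bound _ zero_le_one fun x => ?_
  set y : EuclideanSpace ℝ m := toEuclideanLin K x
  have hy : ‖y‖ ^ 2 ≤ ‖x‖ * ‖y‖ :=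
    calc ‖y‖ ^ 2 = inner ℝ y y := (real_inner_self_eq_norm_sq y).symm
      _ ≤ inner ℝ x y := by
        rw [EuclideanSpace.inner_eq_star_dotProduct, EuclideanSpace.inner_eq_star_dotProduct,
          star_trivial, star_trivial, dotProduct_comm _ (WithLp.ofLp x)]
        exact hK (WithLp.ofLp x)
      _ ≤ ‖x‖ * ‖y‖ := real_inner_le_norm x y
  change ‖y‖ ≤ 1 * ‖x‖
  nlinarith [norm_nonneg x, norm_nonneg y]

variable [Fintype N]

theorem dotProduct_mulVec_le_of_posSemidef_sub {M : Matrix N N ℝ} {A : Matrix m N ℝ}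
    (hMA : (M - Aᵀ * A).PosSemidef) (u : N → ℝ) :
    (A *ᵥ u) ⬝ᵥ (A *ᵥ u) ≤ u ⬝ᵥ (M *ᵥ u) := by
  have h := hMA.dotProduct_mulVec_nonneg u
  rwa [star_trivial, sub_mulVec, dotProduct_sub, sub_nonneg, ← mulVec_mulVec,
    dotProduct_mulVec, ← mulVec_transpose, transpose_transpose, dotProduct_comm] at h

theorem IsMoorePenroseInverse.dotProduct_mulVec_le {M G : Matrix N N ℝ} {A : Matrix m N ℝ}
    (hG : IsMoorePenroseInverse M G) (hGt : Gᵀ = G)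
    (hA : ∀ u, (A *ᵥ u) ⬝ᵥ (A *ᵥ u) ≤ u ⬝ᵥ (M *ᵥ u)) (v : m → ℝ) :
    ((A * G * Aᵀ) *ᵥ v) ⬝ᵥ ((A * G * Aᵀ) *ᵥ v) ≤ v ⬝ᵥ ((A * G * Aᵀ) *ᵥ v) := by
  have hMu (y : N → ℝ) : (G *ᵥ y) ⬝ᵥ (M *ᵥ (G *ᵥ y)) = y ⬝ᵥ (G *ᵥ y) := by
    rw [dotProduct_comm, dotProduct_mulVec, ← mulVec_transpose, hGt, dotProduct_comm,
      mulVec_mulVec, mulVec_mulVec, hG.2.1]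
  rw [← mulVec_mulVec, ← mulVec_mulVec]
  calc (A *ᵥ G *ᵥ Aᵀ *ᵥ v) ⬝ᵥ (A *ᵥ G *ᵥ Aᵀ *ᵥ v)
      ≤ (G *ᵥ Aᵀ *ᵥ v) ⬝ᵥ (M *ᵥ G *ᵥ Aᵀ *ᵥ v) := hA _
    _ = v ⬝ᵥ (A *ᵥ G *ᵥ Aᵀ *ᵥ v) := by rw [hMu, mulVec_transpose, ← dotProduct_mulVec]

variable [DecidableEq m] [DecidableEq N]

theorem opNorm_mul_pinv_mul_transpose_le_one {M : Matrix N N ℝ} {A : Matrix m N ℝ}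
    (hMA : (M - Aᵀ * A).PosSemidef) : opNorm (A * pinv M * Aᵀ) ≤ 1 := by
  have hM := transpose_eq_of_posSemidef_sub_transpose_mul_self hMA
  rcases isMoorePenroseInverse_pinv_or_pinv_eq_zero M with hG | hG
  · exact opNorm_le_one_of_dotProduct_le _ <| IsMoorePenroseInverse.dotProduct_mulVec_le hG
      (hG.transpose_eq_self hM) (dotProduct_mulVec_le_of_posSemidef_sub hMA)
  · simp [hG, opNorm]

theorem opNorm_mul_pinv_mul_transpose_le_one_of_mul_eq {M P : Matrix N N ℝ} {A : Matrix m N ℝ}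
    (hMAP : (M - (A * P)ᵀ * (A * P)).PosSemidef) (hMP : M * P = M) (hP : Pᵀ = P) :
    opNorm (A * pinv M * Aᵀ) ≤ 1 := by
  have hM := transpose_eq_of_posSemidef_sub_transpose_mul_self hMAP
  have hGP : pinv M * P = pinv M := pinv_mul_eq_self_of_mul_eq hM hMP
  have hPG : P * pinv M = pinv M := by
    rw [← hP, ← transpose_pinv_of_transpose_eq hM, ← transpose_mul, hGP]
  have hN : A * pinv M * Aᵀ = A * P * pinv M * (A * P)ᵀ := by
    rw [transpose_mul, hP, Matrix.mul_assoc A P, hPG, ← Matrix.mul_assoc _ P,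
      Matrix.mul_assoc A _ P, hGP]
  rw [hN]
  exact opNorm_mul_pinv_mul_transpose_le_one hMAP

end OperatorNorm

section ElasticNet

variable {n p T : ℕ}

theorem transpose_one_kronecker {l m k : Type*} [DecidableEq l] (A : Matrix m k ℝ) :
    ((1 : Matrix l l ℝ) ⊗ₖ A)ᵀ = 1 ⊗ₖ Aᵀ := by
  rw [← kroneckerMap_transpose, transpose_one]

theorem Psupp_eq_diagonal (B : Matrix (Fin p) (Fin T) ℝ) :
    Psupp B = diagonal fun j => if B j = 0 then 0 else 1 := by
  ext j k
  by_cases hjk : j = k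
  · subst hjk
    by_cases hB : B j = 0 <;> simp [Psupp, hB]
  · simp [Psupp, hjk]

theorem transpose_Psupp (B : Matrix (Fin p) (Fin T) ℝ) : (Psupp B)ᵀ = Psupp B := by
  rw [Psupp_eq_diagonal, diagonal_transpose]

theorem Psupp_mul_self (B : Matrix (Fin p) (Fin T) ℝ) : Psupp B * Psupp B = Psupp B := by
  rw [Psupp_eq_diagonal, diagonal_mul_diagonal]
  congr 1
  ext j
  split_ifs <;> norm_num

theorem posSemidef_Psupp (B : Matrix (Fin p) (Fin T) ℝ) : (Psupp B).PosSemidef := by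
  rw [Psupp_eq_diagonal]
  exact .diagonal fun j => by dsimp only; split_ifs <;> norm_num

theorem mul_Psupp (X : Matrix (Fin n) (Fin p) ℝ) (B : Matrix (Fin p) (Fin T) ℝ) :
    X * Psupp B = Xsupp X B := by
  ext i j
  by_cases hB : B j = 0 <;> simp [Psupp_eq_diagonal, Xsupp, hB]

theorem single_mul_Psupp {B : Matrix (Fin p) (Fin T) ℝ} {k : Fin p} (hk : B k ≠ 0) :
    single k k (1 : ℝ) * Psupp B = single k k 1 := by
  rw [Psupp_eq_diagonal, ← diagonal_single, diagonal_mul_diagonal]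
  congr 1
  ext j
  by_cases hj : j = k
  · subst hj; simp [hk]
  · simp [hj]

theorem rowHess_zero (lam : ℝ) : rowHess lam (0 : Fin T → ℝ) = 0 := by
  simp [rowHess]

theorem posSemidef_rowHess {lam : ℝ} (hlam : 0 ≤ lam) (r : Fin T → ℝ) :
    (rowHess lam r).PosSemidef := by
  unfold rowHess
  split_ifs with hr
  · exact .zero
  refine .smul ?_ (by positivity)
  have hs : 0 < ∑ t, r t ^ 2 := by
    obtain ⟨t, ht⟩ := Function.ne_iff.mp hr
    exact Finset.sum_pos' (fun i _ => sq_nonneg (r i))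
      ⟨t, Finset.mem_univ t, pow_two_pos_of_ne_zero ht⟩
  refine .of_dotProduct_mulVec_nonneg ?_ fun w => ?_
  · simp [isHermitian_iff_isSymm, IsSymm, transpose_sub]
  have hrw : w ⬝ᵥ (vecMulVec r r *ᵥ w) = (r ⬝ᵥ w) ^ 2 := by
    simp [vecMulVec_mulVec, dotProduct_comm w r, sq]
  have hcs : (r ⬝ᵥ w) ^ 2 ≤ (∑ t, r t ^ 2) * (w ⬝ᵥ w) := by
    simpa [dotProduct, sq] using Finset.sum_mul_sq_le_sq_mul_sq Finset.univ r w
  rw [star_trivial, sub_mulVec, one_mulVec, smul_mulVec, dotProduct_sub, dotProduct_smul, hrw,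
    smul_eq_mul, sub_nonneg, inv_mul_le_iff₀ hs]
  exact hcs

variable (lam tau : ℝ) (X : Matrix (Fin n) (Fin p) ℝ) (B : Matrix (Fin p) (Fin T) ℝ)

theorem Mmat_mul_kronecker_Psupp :
    Mmat n lam tau X B * ((1 : Matrix (Fin T) (Fin T) ℝ) ⊗ₖ Psupp B) = Mmat n lam tau X B := by
  have hXsupp : (Xsupp X B)ᵀ * Xsupp X B * Psupp B = (Xsupp X B)ᵀ * Xsupp X B := by
    rw [Matrix.mul_assoc, ← mul_Psupp, Matrix.mul_assoc, Psupp_mul_self]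
  have hHess (k : Fin p) : (rowHess lam (B k) ⊗ₖ single k k (1 : ℝ)) * (1 ⊗ₖ Psupp B)
      = rowHess lam (B k) ⊗ₖ single k k 1 := by
    rw [← mul_kronecker_mul, Matrix.mul_one]
    by_cases hk : B k = 0
    · rw [hk, rowHess_zero, zero_kronecker, zero_kronecker]
    · rw [single_mul_Psupp hk]
  rw [Mmat, Matrix.add_mul, ← mul_kronecker_mul, Matrix.one_mul, Matrix.add_mul, hXsupp,
    smul_mul, Psupp_mul_self, smul_mul, Finset.sum_mul, Finset.sum_congr rfl fun k _ => hHess k]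

theorem posSemidef_Mmat_sub_transpose_mul_self (hlam : 0 ≤ lam) (htau : 0 ≤ tau) :
    (Mmat n lam tau X B - ((1 : Matrix (Fin T) (Fin T) ℝ) ⊗ₖ Xsupp X B)ᵀ *
      ((1 : Matrix (Fin T) (Fin T) ℝ) ⊗ₖ Xsupp X B)).PosSemidef := by
  have hdiff : Mmat n lam tau X B - ((1 : Matrix (Fin T) (Fin T) ℝ) ⊗ₖ Xsupp X B)ᵀ *
      ((1 : Matrix (Fin T) (Fin T) ℝ) ⊗ₖ Xsupp X B)
      = (1 : Matrix (Fin T) (Fin T) ℝ) ⊗ₖ ((tau * n) • Psupp B)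
        + (n : ℝ) • ∑ k : Fin p, rowHess lam (B k) ⊗ₖ single k k (1 : ℝ) := by
    rw [transpose_one_kronecker, ← mul_kronecker_mul, Matrix.one_mul, Mmat,
      kronecker_add]
    abel
  have hsingle (k : Fin p) : (single k k (1 : ℝ)).PosSemidef := by
    rw [← diagonal_single]
    exact .diagonal (Pi.single_nonneg.mpr zero_le_one)
  rw [hdiff]
  exact (PosSemidef.one.kronecker ((posSemidef_Psupp B).smul (by positivity))).add <|
    (posSemidef_sum _ fun k _ => (posSemidef_rowHess hlam _).kronecker (hsingle k)).smul
      (Nat.cast_nonneg n)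

end ElasticNet

theorem statement_11_general (n p T : ℕ)
    (X : Matrix (Fin n) (Fin p) ℝ)
    (lam tau : ℝ) (hlam : 0 ≤ lam) (htau : 0 ≤ tau)
    (Bhat : Matrix (Fin p) (Fin T) ℝ) :
    opNorm (((1 : Matrix (Fin T) (Fin T) ℝ) ⊗ₖ X) * pinv (Mmat n lam tau X Bhat) *
        ((1 : Matrix (Fin T) (Fin T) ℝ) ⊗ₖ Xᵀ)) ≤ 1 := by
  have hXP : ((1 : Matrix (Fin T) (Fin T) ℝ) ⊗ₖ X) *
      ((1 : Matrix (Fin T) (Fin T) ℝ) ⊗ₖ Psupp Bhat)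
      = (1 : Matrix (Fin T) (Fin T) ℝ) ⊗ₖ Xsupp X Bhat := by
    rw [← mul_kronecker_mul, Matrix.one_mul, mul_Psupp]
  have hXt : (1 : Matrix (Fin T) (Fin T) ℝ) ⊗ₖ Xᵀ = ((1 : Matrix (Fin T) (Fin T) ℝ) ⊗ₖ X)ᵀ :=
    (transpose_one_kronecker X).symm
  rw [hXt]
  refine opNorm_mul_pinv_mul_transpose_le_one_of_mul_eq ?_
    (Mmat_mul_kronecker_Psupp lam tau X Bhat) ?_
  · rw [hXP]
    exact posSemidef_Mmat_sub_transpose_mul_self lam tau X Bhat hlam htau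
  · rw [transpose_one_kronecker, transpose_Psupp]

/-- Lemma: `‖N‖_op ≤ 1` for `N = (I_T ⊗ X) M† (I_T ⊗ Xᵀ)`. -/
theorem statement_11 (n p T : ℕ)
    (X : Matrix (Fin n) (Fin p) ℝ) (Y : Matrix (Fin n) (Fin T) ℝ)
    (lam tau : ℝ) (hlam : 0 ≤ lam) (htau : 0 ≤ tau)
    (Bhat : Matrix (Fin p) (Fin T) ℝ)
    (hmin : ∀ B, objective n lam tau Y X Bhat ≤ objective n lam tau Y X B) :
    opNorm (((1 : Matrix (Fin T) (Fin T) ℝ) ⊗ₖ X) * pinv (Mmat n lam tau X Bhat) *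
        ((1 : Matrix (Fin T) (Fin T) ℝ) ⊗ₖ Xᵀ)) ≤ 1 :=
  statement_11_general n p T X lam tau hlam htau Bhat

end MTS
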